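/- Let A be an n×n real matrix and let V_1 ∪ … ∪ V_m be an equitable partition of {1,…,n} for A, with characteristic matrix S, Λ = diag(|V_1|,…,|V_m|), and quotient B = Q(A) = Λ⁻¹ Sᵀ A S. Then the matrix exponential satisfies exp(B) = Λ⁻¹ Sᵀ exp(A) S, i.e., exp(Q(A)) = Q(exp(A)). -/

import Mathlib

/-!
Equitability says exactly that the rows of `A S` are constant on blocks, i.e. `A S = S C` for
some `C`; since `Λ⁻¹ Sᵀ S = 1`, necessarily `C = Q(A)`. The intertwining relation
`A S = S Q(A)` passes to powers and hence, term by term in the exponential series, to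
`exp A · S = S · exp Q(A)`. Multiplying on the left by `Λ⁻¹ Sᵀ` gives the claim.
-/

open Matrix Finset

section Partition

variable {ι κ η R : Type*} [DecidableEq κ]

variable (R) in
def partitionMatrix [Zero R] [One R] (p : ι → κ) : Matrix ι κ R :=
  of fun i k => if p i = k then 1 else 0

def IsEquitable [Fintype ι] [AddCommMonoid R] (A : Matrix ι ι R) (p : ι → κ) : Prop :=
  ∀ i₁ i₂, p i₁ = p i₂ → ∀ l, ∑ j with p j = l, A i₁ j = ∑ j with p j = l, A i₂ j

noncomputable def partitionQuotient [Fintype ι] [Fintype κ] [Field R] (p : ι → κ)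
    (A : Matrix ι ι R) : Matrix κ κ R :=
  (diagonal fun k => (#{i | p i = k} : R))⁻¹ * (partitionMatrix R p)ᵀ * A * partitionMatrix R p

theorem mul_partitionMatrix_apply [Fintype ι] [NonAssocSemiring R] (M : Matrix η ι R)
    (p : ι → κ) (i : η) (l : κ) : (M * partitionMatrix R p) i l = ∑ j with p j = l, M i j := by
  simp [mul_apply, partitionMatrix, sum_filter]

theorem partitionMatrix_mul_apply [Fintype κ] [NonAssocSemiring R] (p : ι → κ)
    (N : Matrix κ η R) (i : ι) (l : η) : (partitionMatrix R p * N) i l = N (p i) l := by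
  simp [mul_apply, partitionMatrix]

theorem transpose_partitionMatrix_mul_self [Fintype ι] [NonAssocSemiring R] (p : ι → κ) :
    (partitionMatrix R p)ᵀ * partitionMatrix R p = diagonal fun k => (#{i | p i = k} : R) := by
  ext k l
  rw [mul_partitionMatrix_apply]
  calc ∑ j with p j = l, (partitionMatrix R p)ᵀ k j
      = ∑ j with p j = l, if k = l then (1 : R) else 0 :=
        sum_congr rfl fun j hj => by simp [partitionMatrix, (mem_filter.1 hj).2, eq_comm]
    _ = _ := by by_cases h : k = l <;> simp [h]

theorem partitionQuotient_eq_of_mul_eq_mul [Fintype ι] [Fintype κ] [Field R] [CharZero R]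
    {p : ι → κ} (hp : p.Surjective) {A : Matrix ι ι R} {C : Matrix κ κ R}
    (h : A * partitionMatrix R p = partitionMatrix R p * C) : partitionQuotient p A = C := by
  have hΛ : IsUnit (diagonal fun k => (#{i | p i = k} : R)) := by
    refine isUnit_diagonal.2 (Pi.isUnit_iff.2 fun k => ?_)
    obtain ⟨i, rfl⟩ := hp k
    exact (Nat.cast_ne_zero.2 (card_ne_zero.2 ⟨i, by simp⟩)).isUnit
  rw [partitionQuotient, Matrix.mul_assoc, h, ← Matrix.mul_assoc,
    Matrix.mul_assoc _ (partitionMatrix R p)ᵀ, transpose_partitionMatrix_mul_self,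
    nonsing_inv_mul _ ((isUnit_iff_isUnit_det _).1 hΛ), Matrix.one_mul]

theorem IsEquitable.exists_mul_partitionMatrix_eq [Fintype ι] [Fintype κ] [CommRing R]
    {A : Matrix ι ι R} {p : ι → κ} (hA : IsEquitable A p) (hp : p.Surjective) :
    ∃ C : Matrix κ κ R, A * partitionMatrix R p = partitionMatrix R p * C := by
  refine ⟨(A * partitionMatrix R p).submatrix (Function.surjInv hp) id, ?_⟩
  ext i l
  simp only [partitionMatrix_mul_apply, submatrix_apply, id, mul_partitionMatrix_apply]
  exact hA _ _ (Function.surjInv_eq hp (p i)).symm l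

theorem IsEquitable.mul_partitionMatrix_eq_mul_partitionQuotient [Fintype ι] [Fintype κ]
    [Field R] [CharZero R] {A : Matrix ι ι R} {p : ι → κ} (hA : IsEquitable A p)
    (hp : p.Surjective) :
    A * partitionMatrix R p = partitionMatrix R p * partitionQuotient p A := by
  obtain ⟨C, hC⟩ := hA.exists_mul_partitionMatrix_eq hp
  rwa [partitionQuotient_eq_of_mul_eq_mul hp hC]

end Partition

section Intertwining

variable {ι κ : Type*} [Fintype ι] [DecidableEq ι] [Fintype κ] [DecidableEq κ]

theorem Matrix.pow_mul_eq_mul_pow_of_mul_eq_mul {R : Type*} [Semiring R] {A : Matrix ι ι R}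
    {B : Matrix κ κ R} {S : Matrix ι κ R} (h : A * S = S * B) (k : ℕ) :
    A ^ k * S = S * B ^ k := by
  induction k with
  | zero => simp
  | succ k ih =>
    rw [pow_succ, pow_succ, Matrix.mul_assoc, h, ← Matrix.mul_assoc, ih, Matrix.mul_assoc]

-- `NormedSpace.exp` does not depend on a norm; this one only supplies summability of the series.
attribute [local instance] Matrix.linftyOpNormedRing Matrix.linftyOpNormedAlgebra

theorem Matrix.exp_mul_eq_mul_exp_of_mul_eq_mul {𝕂 : Type*} [RCLike 𝕂] {A : Matrix ι ι 𝕂}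
    {B : Matrix κ κ 𝕂} {S : Matrix ι κ 𝕂} (h : A * S = S * B) :
    NormedSpace.exp A * S = S * NormedSpace.exp B := by
  have hA := (NormedSpace.exp_series_hasSum_exp' (𝕂 := 𝕂) A).map (mulRightLinearMap ι 𝕂 S)
    (LinearMap.continuous_of_finiteDimensional _)
  have hB := (NormedSpace.exp_series_hasSum_exp' (𝕂 := 𝕂) B).map (mulLeftLinearMap κ 𝕂 S)
    (LinearMap.continuous_of_finiteDimensional _)
  refine hA.unique (hB.congr_fun fun k => ?_)
  simp only [Function.comp_apply, mulLeftLinearMap_apply, mulRightLinearMap_apply,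
    Matrix.mul_smul, Matrix.smul_mul, pow_mul_eq_mul_pow_of_mul_eq_mul h]

end Intertwining

/-- Let `A` be an `n×n` real matrix and let `V_1 ∪ … ∪ V_m` be an equitable
partition of `{1,…,n}` for `A` (given by the surjective block-assignment map `p`), with
characteristic matrix `S`, `Λ = diag(|V_1|,…,|V_m|)`, and quotient `B = Q(A) = Λ⁻¹ Sᵀ A S`.
Then the matrix exponential satisfies `exp(B) = Λ⁻¹ Sᵀ exp(A) S`, i.e.
`exp(Q(A)) = Q(exp(A))`. -/
theorem exp_quotient_comm {n m : ℕ} (A : Matrix (Fin n) (Fin n) ℝ)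
    (p : Fin n → Fin m) (hp : Function.Surjective p)
    (S : Matrix (Fin n) (Fin m) ℝ)
    (hS : S = fun i k => if p i = k then (1 : ℝ) else 0)
    (heq : ∀ i₁ i₂ : Fin n, p i₁ = p i₂ → ∀ l : Fin m,
        ∑ j ∈ Finset.univ.filter (fun j => p j = l), A i₁ j
          = ∑ j ∈ Finset.univ.filter (fun j => p j = l), A i₂ j)
    (Λ : Matrix (Fin m) (Fin m) ℝ)
    (hΛ : Λ = Matrix.diagonal fun k => ((Finset.univ.filter fun i => p i = k).card : ℝ))
    (B : Matrix (Fin m) (Fin m) ℝ) (hB : B = Λ⁻¹ * Sᵀ * A * S) :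
    NormedSpace.exp B = Λ⁻¹ * Sᵀ * NormedSpace.exp A * S := by
  subst hS hΛ hB
  have hA : IsEquitable A p := heq
  have hexp := exp_mul_eq_mul_exp_of_mul_eq_mul
    (hA.mul_partitionMatrix_eq_mul_partitionQuotient (R := ℝ) hp)
  exact (partitionQuotient_eq_of_mul_eq_mul hp hexp).symm
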